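/- arXiv:0906.2104 — 3 statements merged into one kernel-verified Lean document; each statement's English description precedes it below -/
import Mathlib

section
/- Let n ≥ 1, α ≥ 1, g = gcd(n,α), n_α = n/g, ǎ = α/g. Let Ẑ_{n,α} ∈ ℂ^{n×n_α} have entries (Ẑ_{n,α})_{r,s} = δ_{(r−αs) mod n, 0}, let Ẑ_{n,g} ∈ ℂ^{n×n_α} have entries δ_{(r−gs) mod n, 0}, and let Z_{n_α,ǎ} ∈ ℂ^{n_α×n_α} have entries δ_{(r−ǎs) mod n_α, 0}. Then Ẑ_{n,α} = Ẑ_{n,g} · Z_{n_α,ǎ}. -/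
/-- The `n × m` 0-1 matrix with entry 1 at `(r,s)` iff `r ≡ k·s (mod n)`. -/
def ZmatR (n m k : ℕ) : Matrix (Fin n) (Fin m) ℂ :=
  Matrix.of fun r s => if ((r : ℤ) - (k : ℤ) * (s : ℤ)) % (n : ℤ) = 0 then 1 else 0

/-- `Ẑ_{n,α} = Ẑ_{n,g} · Z_{n_α,ǎ}` where `g = gcd(n,α)`, `n_α = n/g`, `ǎ = α/g`. -/
theorem stmt2 (n α : ℕ) (hn : 1 ≤ n) (hα : 1 ≤ α) :
    ZmatR n (n / Nat.gcd n α) α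
      = ZmatR n (n / Nat.gcd n α) (Nat.gcd n α)
          * ZmatR (n / Nat.gcd n α) (n / Nat.gcd n α) (α / Nat.gcd n α) := by
  set g := Nat.gcd n α with hg
  set m := n / g with hm
  set a := α / g with ha
  have hgpos : 0 < g := Nat.gcd_pos_of_pos_left α hn
  have hmpos : 0 < m := Nat.div_pos (Nat.le_of_dvd hn (Nat.gcd_dvd_left n α)) hgpos
  have hn' : n = g * m := by
    rw [hm, Nat.mul_div_cancel' (Nat.gcd_dvd_left n α)]
  have hα' : α = g * a := by
    rw [ha, Nat.mul_div_cancel' (Nat.gcd_dvd_right n α)]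
  ext r s
  simp only [ZmatR, Matrix.mul_apply, Matrix.of_apply]
  set t0 : Fin m := ⟨(a * s) % m, Nat.mod_lt _ hmpos⟩ with ht0
  have ht0v : (t0 : ℤ) = ((a : ℤ) * (s : ℤ)) % (m : ℤ) := by
    simp only [ht0]
    push_cast
    ring_nf
  have hsum : ∀ t : Fin m,
      ((if ((r : ℤ) - (g : ℤ) * (t : ℤ)) % (n : ℤ) = 0 then (1:ℂ) else 0) *
        (if ((t : ℤ) - (a : ℤ) * (s : ℤ)) % (m : ℤ) = 0 then 1 else 0))
      = if t = t0 then (if ((r : ℤ) - (g : ℤ) * (t0 : ℤ)) % (n : ℤ) = 0 then 1 else 0)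
        else 0 := by
    intro t
    have hiff : ((t : ℤ) - (a : ℤ) * (s : ℤ)) % (m : ℤ) = 0 ↔ t = t0 := by
      constructor
      · intro h
        have hd : (m : ℤ) ∣ ((t : ℤ) - (a : ℤ) * (s : ℤ)) := Int.dvd_of_emod_eq_zero h
        have hmod : ((a : ℤ) * s) % m = (t : ℤ) % m :=
          Int.modEq_iff_dvd.mpr hd
        have htlt : (t : ℤ) % m = (t : ℤ) :=
          Int.emod_eq_of_lt (by exact_mod_cast Nat.zero_le _) (by exact_mod_cast t.isLt)
        have hint : ((t : ℕ) : ℤ) = ((a : ℤ) * s) % m := by rw [← htlt, ← hmod]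
        have h1 : (((a * s % m : ℕ)) : ℤ) = ((a : ℤ) * s) % m := by push_cast; ring_nf
        exact Fin.ext (by exact_mod_cast hint.trans h1.symm)
      · intro h
        subst h
        rw [ht0v, Int.sub_emod, Int.emod_emod_of_dvd _ dvd_rfl, sub_self, Int.zero_emod]
    by_cases h : t = t0
    · rw [if_pos (hiff.mpr h), if_pos h, mul_one, h]
    · rw [if_neg (fun hh => h (hiff.mp hh)), if_neg h, mul_zero]
  rw [Finset.sum_congr rfl (fun t _ => hsum t), Finset.sum_ite_eq' Finset.univ t0]
  simp only [Finset.mem_univ, if_true]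
  have key : ((r : ℤ) - (α : ℤ) * (s : ℤ)) % (n : ℤ)
      = ((r : ℤ) - (g : ℤ) * (t0 : ℤ)) % (n : ℤ) := by
    have hdvd : (n : ℤ) ∣ (((r : ℤ) - (g : ℤ) * (t0 : ℤ)) - ((r : ℤ) - (α : ℤ) * (s : ℤ))) := by
      rw [ht0v]
      have hmd : ((a : ℤ) * s) % m = (a : ℤ) * s - m * ((a : ℤ) * s / m) := by
        rw [Int.emod_def]
      rw [hmd]
      refine ⟨(a : ℤ) * s / m, ?_⟩
      have : (n : ℤ) = (g : ℤ) * (m : ℤ) := by exact_mod_cast hn'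
      have hαz : (α : ℤ) = (g : ℤ) * (a : ℤ) := by exact_mod_cast hα'
      rw [this, hαz]; ring
    exact Int.modEq_iff_dvd.mpr hdvd
  rw [key]
end

section
/- Let n ≥ 1, α ≥ 1, g = gcd(n,α), n_α = n/g, ǎ = α/g. Let F_n = (1/√n)[e^{−2πi jk/n}]_{j,k=0}^{n−1} be the Fourier matrix and Ẑ_{n,α} ∈ ℂ^{n×n_α} the matrix with entries δ_{(r−αs) mod n, 0}. Then F_n Ẑ_{n,α} = (1/√g) · I_{n,α} · F_{n_α} · Z_{n_α,ǎ}, where I_{n,α} ∈ ℂ^{n×n_α} is the block column [I_{n_α}; I_{n_α}; …; I_{n_α}] (g copies of the n_α×n_α identity stacked vertically) and Z_{n_α,ǎ} ∈ ℂ^{n_α×n_α} has entries δ_{(r−ǎs) mod n_α, 0}. -/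
/-- The unitary Fourier matrix `F_n = (1/√n)[e^{-2πi jk/n}]`. -/
noncomputable def Fmat (n : ℕ) : Matrix (Fin n) (Fin n) ℂ :=
  Matrix.of fun j k =>
    ((Real.sqrt n : ℂ))⁻¹ *
      Complex.exp (-(2 * Real.pi * Complex.I * (j : ℕ) * (k : ℕ)) / (n : ℕ))

/-- The `n × n_α` block column `[I_{n_α}; …; I_{n_α}]` (`g` copies stacked):
entry `(r,s)` is 1 iff `r ≡ s (mod n_α)`. -/
def Irect (n α : ℕ) : Matrix (Fin n) (Fin (n / Nat.gcd n α)) ℂ :=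
  Matrix.of fun r s => if (r : ℕ) % (n / Nat.gcd n α) = (s : ℕ) then 1 else 0

noncomputable def zetaN (N : ℕ) : ℂ := Complex.exp (-(2 * Real.pi * Complex.I) / N)

lemma exp_eq_zeta_pow (N a b : ℕ) :
    Complex.exp (-(2 * Real.pi * Complex.I * a * b) / N) = zetaN N ^ (a * b) := by
  rw [zetaN, ← Complex.exp_nat_mul]
  congr 1
  push_cast
  ring

lemma zetaN_root (N : ℕ) (hN : N ≠ 0) : zetaN N ^ N = 1 := by
  rw [zetaN, ← Complex.exp_nat_mul]
  have hN' : (N : ℂ) ≠ 0 := Nat.cast_ne_zero.mpr hN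
  have : (N : ℂ) * (-(2 * Real.pi * Complex.I) / N) = -(2 * Real.pi * Complex.I) := by
    field_simp
  rw [this, Complex.exp_neg, Complex.exp_two_pi_mul_I, inv_one]

lemma zetaN_pow_congr (N : ℕ) (hN : N ≠ 0) {a b : ℕ} (h : a ≡ b [MOD N]) :
    zetaN N ^ a = zetaN N ^ b := by
  have key : ∀ c : ℕ, zetaN N ^ c = zetaN N ^ (c % N) := by
    intro c
    conv_lhs => rw [← Nat.div_add_mod c N]
    rw [pow_add, pow_mul, zetaN_root N hN, one_pow, one_mul]
  rw [key a, key b, h]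

/-- Collapse multiplication by a `Z` matrix on the right. -/
lemma mul_ZmatR_apply {p : ℕ} (n' m' k : ℕ) (hn' : 0 < n')
    (A : Matrix (Fin p) (Fin n') ℂ) (j : Fin p) (s : Fin m') :
    (A * ZmatR n' m' k) j s = A j ⟨k * s % n', Nat.mod_lt _ hn'⟩ := by
  rw [Matrix.mul_apply]
  have key : ∀ r : Fin n',
      (((r : ℤ) - (k : ℤ) * (s : ℤ)) % (n' : ℤ) = 0) ↔ r = ⟨k * s % n', Nat.mod_lt _ hn'⟩ := by
    intro r
    rw [← Int.emod_eq_emod_iff_emod_sub_eq_zero]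
    have h1 : (r : ℤ) % n' = (r : ℤ) :=
      Int.emod_eq_of_lt (by exact_mod_cast Nat.zero_le _) (by exact_mod_cast r.isLt)
    have h2 : (k : ℤ) * (s : ℤ) % n' = ((k * s % n' : ℕ) : ℤ) := by
      push_cast
      ring_nf
    rw [h1, h2]
    constructor
    · intro h
      apply Fin.ext
      exact_mod_cast h
    · intro h
      exact_mod_cast congrArg (fun x : Fin n' => ((x : ℕ) : ℤ)) h
  calc (∑ r, A j r * ZmatR n' m' k r s)
      = ∑ r, (if r = ⟨k * s % n', Nat.mod_lt _ hn'⟩ then A j r else 0) := by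
        apply Finset.sum_congr rfl
        intro r _
        rw [ZmatR, Matrix.of_apply]
        by_cases h : ((r : ℤ) - (k : ℤ) * (s : ℤ)) % (n' : ℤ) = 0
        · rw [if_pos h, if_pos ((key r).mp h), mul_one]
        · rw [if_neg h, if_neg (fun hc => h ((key r).mpr hc)), mul_zero]
    _ = A j ⟨k * s % n', Nat.mod_lt _ hn'⟩ := by
        rw [Finset.sum_ite_eq', if_pos (Finset.mem_univ _)]

/-- Collapse multiplication by `Irect` on the left. -/
lemma Irect_mul_apply {q : ℕ} (n α : ℕ) (hm : 0 < n / Nat.gcd n α)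
    (B : Matrix (Fin (n / Nat.gcd n α)) (Fin q) ℂ) (j : Fin n) (u : Fin q) :
    (Irect n α * B) j u = B ⟨(j : ℕ) % (n / Nat.gcd n α), Nat.mod_lt _ hm⟩ u := by
  rw [Matrix.mul_apply]
  calc (∑ t, Irect n α j t * B t u)
      = ∑ t, (if t = ⟨(j : ℕ) % (n / Nat.gcd n α), Nat.mod_lt _ hm⟩ then B t u else 0) := by
        apply Finset.sum_congr rfl
        intro t _
        rw [Irect, Matrix.of_apply]
        have : ((j : ℕ) % (n / Nat.gcd n α) = (t : ℕ)) ↔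
            t = ⟨(j : ℕ) % (n / Nat.gcd n α), Nat.mod_lt _ hm⟩ := by
          constructor
          · intro h; exact Fin.ext h.symm
          · intro h; rw [h]
        by_cases h : (j : ℕ) % (n / Nat.gcd n α) = (t : ℕ)
        · rw [if_pos h, if_pos (this.mp h), one_mul]
        · rw [if_neg h, if_neg (fun hc => h (this.mpr hc)), zero_mul]
    _ = B ⟨(j : ℕ) % (n / Nat.gcd n α), Nat.mod_lt _ hm⟩ u := by
        rw [Finset.sum_ite_eq', if_pos (Finset.mem_univ _)]

/-- `F_n Ẑ_{n,α} = (1/√g) I_{n,α} F_{n_α} Z_{n_α,ǎ}`. -/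
theorem stmt3 (n α : ℕ) (hn : 1 ≤ n) (hα : 1 ≤ α) :
    Fmat n * ZmatR n (n / Nat.gcd n α) α
      = ((Real.sqrt (Nat.gcd n α) : ℂ))⁻¹ •
          (Irect n α * Fmat (n / Nat.gcd n α)
            * ZmatR (n / Nat.gcd n α) (n / Nat.gcd n α) (α / Nat.gcd n α)) := by
  have hn0 : n ≠ 0 := Nat.one_le_iff_ne_zero.mp hn
  have hnpos : 0 < n := hn
  set g := Nat.gcd n α with hgdef
  set m := n / g with hmdef
  have hg0 : g ≠ 0 := Nat.gcd_ne_zero_left hn0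
  have hgpos : 0 < g := Nat.pos_of_ne_zero hg0
  have hgn : g ∣ n := Nat.gcd_dvd_left n α
  have hmpos : 0 < m := Nat.div_pos (Nat.le_of_dvd hnpos hgn) hgpos
  have hm0 : m ≠ 0 := hmpos.ne'
  have hnm : g * m = n := Nat.mul_div_cancel' hgn
  have hαg : g * (α / g) = α := Nat.mul_div_cancel' (Nat.gcd_dvd_right n α)
  ext j s
  rw [Matrix.smul_apply, mul_ZmatR_apply n m α hnpos (Fmat n) j s,
      mul_ZmatR_apply m m (α / g) hmpos (Irect n α * Fmat m) j s,
      Irect_mul_apply n α hmpos (Fmat m) j ⟨α / g * s % m, Nat.mod_lt _ hmpos⟩]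
  rw [Fmat, Fmat, Matrix.of_apply, Matrix.of_apply]
  simp only []
  rw [exp_eq_zeta_pow, exp_eq_zeta_pow]
  -- relate zetaN m powers to zetaN n powers
  have hzeta : zetaN m = zetaN n ^ g := by
    rw [zetaN, zetaN, ← Complex.exp_nat_mul]
    congr 1
    have hgC : (g : ℂ) ≠ 0 := Nat.cast_ne_zero.mpr hg0
    have hmC : (m : ℂ) ≠ 0 := Nat.cast_ne_zero.mpr hm0
    have hnC : (n : ℂ) = (g : ℂ) * (m : ℂ) := by exact_mod_cast hnm.symm
    rw [hnC]
    field_simp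
  have hmod : g * ((j : ℕ) % m * (α / g * s % m)) ≡ (j : ℕ) * (α * s % n) [MOD n] := by
    have h1 : (j : ℕ) % m * (α / g * s % m) ≡ (j : ℕ) * (α / g * s) [MOD m] :=
      (Nat.mod_modEq _ m).mul (Nat.mod_modEq _ m)
    have h2 : g * ((j : ℕ) % m * (α / g * s % m)) ≡ g * ((j : ℕ) * (α / g * s)) [MOD g * m] :=
      h1.mul_left' g
    rw [hnm] at h2
    have h3 : g * ((j : ℕ) * (α / g * s)) = (j : ℕ) * (α * s) :=
      calc g * ((j : ℕ) * (α / g * s)) = (j : ℕ) * (g * (α / g) * s) := by ring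
        _ = (j : ℕ) * (α * s) := by rw [hαg]
    rw [h3] at h2
    have h4 : (j : ℕ) * (α * s) ≡ (j : ℕ) * (α * s % n) [MOD n] :=
      ((Nat.mod_modEq _ n).mul_left _).symm
    exact h2.trans h4
  have hpow : zetaN m ^ ((j : ℕ) % m * (α / g * s % m)) = zetaN n ^ ((j : ℕ) * (α * s % n)) := by
    rw [hzeta, ← pow_mul]
    exact zetaN_pow_congr n hn0 hmod
  rw [hpow]
  -- now the scalar factors
  have hsqrt : ((Real.sqrt n : ℂ))⁻¹ =
      ((Real.sqrt g : ℂ))⁻¹ * ((Real.sqrt m : ℂ))⁻¹ := by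
    rw [← mul_inv]
    congr 1
    rw [← Complex.ofReal_mul, ← Real.sqrt_mul (by positivity) (m : ℝ)]
    congr 2
    exact_mod_cast hnm.symm
  rw [hsqrt, smul_eq_mul]
  ring
end

section
/- Let n ≥ 2, α ≥ 2, μ_α = ⌈n/α⌉, and d > (α−1)(n−1)+2. Let 𝒯_{n,α} ∈ ℂ^{n×(n−μ_α)} be the matrix of the last n−μ_α columns of the α-Toeplitz T_{n,α} = [a_{r−αc}]_{r,c=0}^{n−1}, i.e. (𝒯_{n,α})_{r,s} = a_{r − α(s+μ_α)}. Let T_d = [a_{r−c−d+1}]_{r,c=0}^{d−1}, let 𝒵_{d,α} ∈ ℂ^{d×(n−μ_α)} have entries δ_{r−αs,0} (indicator that r = αs, valid since 0 ≤ αs ≤ d−1), and let Q = [0 | I_n | 0] ∈ ℂ^{n×d} with zero blocks of widths d−αμ_α−1 and αμ_α−n+1. Then 𝒯_{n,α} = Q · T_d · 𝒵_{d,α}. -/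
open Matrix

/-- With `μ_α = ⌈n/α⌉ = (n+α-1)/α` and `d > (α-1)(n-1)+2`, the last `n-μ_α` columns
`𝒯_{n,α} = [a_{r-α(s+μ_α)}]` of the α-Toeplitz `T_{n,α}` factor as
`𝒯_{n,α} = [0|I_n|0] · T_d · 𝒵_{d,α}`. -/
theorem stmt16 (n α d : ℕ) (hn : 2 ≤ n) (hα : 2 ≤ α)
    (hd : (α - 1) * (n - 1) + 2 < d) (a : ℤ → ℂ) :
    (Matrix.of fun (r : Fin n) (s : Fin (n - (n + α - 1) / α)) =>
        a ((r : ℤ) - (α : ℤ) * ((s : ℤ) + (((n + α - 1) / α : ℕ) : ℤ))))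
      = (Matrix.of fun (r : Fin n) (c : Fin d) =>
            if (c : ℤ) = (r : ℤ) + (d : ℤ) - (α : ℤ) * (((n + α - 1) / α : ℕ) : ℤ) - 1
            then (1 : ℂ) else 0)
          * (Matrix.of fun r c : Fin d => a ((r : ℤ) - (c : ℤ) - (d : ℤ) + 1))
          * (Matrix.of fun (r : Fin d) (s : Fin (n - (n + α - 1) / α)) =>
              if (r : ℤ) = (α : ℤ) * (s : ℤ) then (1 : ℂ) else 0) := by
  set μ := (n + α - 1) / α with hμ
  have hα0 : 0 < α := by omega
  have h1 : α * μ ≤ n + α - 1 := by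
    rw [hμ]; exact Nat.mul_div_le _ _
  have h2 : n ≤ α * μ := by
    have h := Nat.div_add_mod (n + α - 1) α
    have hm := Nat.mod_lt (n + α - 1) hα0
    rw [← hμ] at h
    omega
  obtain ⟨A, hA⟩ : ∃ A, α = A + 2 := ⟨α - 2, by omega⟩
  obtain ⟨N, hN⟩ : ∃ N, n = N + 2 := ⟨n - 2, by omega⟩
  have e1 : α - 1 = A + 1 := by omega
  have e2 : n - 1 = N + 1 := by omega
  have h3 : (α - 1) * (n - 1) = A * N + A + N + 1 := by rw [e1, e2]; ring
  have h6 : α * n = A * N + 2 * A + 2 * N + 4 := by rw [hA, hN]; ring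
  have hdm : α * μ + 1 ≤ d := by omega
  ext r s
  have hs : (s : ℕ) < n - μ := s.2
  have hxs : α * (s : ℕ) < d := by
    have hmul : α * ((s:ℕ) + 1) ≤ α * (n - μ) := Nat.mul_le_mul_left _ hs
    have hmul2 : α * ((s:ℕ) + 1) = α * (s:ℕ) + α := by ring
    have h4 : α * (n - μ) + α * μ = α * n := by
      rw [← Nat.mul_add]; congr 1; omega
    omega
  have hr : (r : ℕ) < n := r.2
  have hc0lt : (r : ℕ) + d - α * μ - 1 < d := by omega
  set x0 : Fin d := ⟨α * (s : ℕ), hxs⟩ with hx0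
  set c0 : Fin d := ⟨(r : ℕ) + d - α * μ - 1, hc0lt⟩ with hc0
  have ec0 : ((c0 : ℕ) : ℤ) = (r : ℤ) + (d : ℤ) - (α : ℤ) * (μ : ℤ) - 1 := by
    have : ((c0 : ℕ) : ℤ) = (((r : ℕ) + d - α * μ - 1 : ℕ) : ℤ) := rfl
    rw [this]
    have hle : α * μ + 1 ≤ (r : ℕ) + d := by omega
    push_cast [Nat.cast_sub (by omega : α * μ ≤ (r:ℕ) + d),
      Nat.cast_sub (by omega : 1 ≤ (r:ℕ) + d - α * μ)]
    omega
  have ex0 : ((x0 : ℕ) : ℤ) = (α : ℤ) * (s : ℤ) := by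
    have : ((x0 : ℕ) : ℤ) = ((α * (s:ℕ) : ℕ) : ℤ) := rfl
    rw [this]; push_cast; ring
  simp only [Matrix.mul_apply, Matrix.of_apply]
  rw [Finset.sum_eq_single x0]
  · rw [if_pos ex0, mul_one, Finset.sum_eq_single c0]
    · rw [if_pos ec0, one_mul]
      congr 1
      rw [ec0, ex0]
      ring
    · intro c _ hc
      rw [if_neg, zero_mul]
      intro h
      exact hc (Fin.ext (by exact_mod_cast h.trans ec0.symm))
    · intro h; exact absurd (Finset.mem_univ c0) h
  · intro x _ hx
    rw [if_neg, mul_zero]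
    intro h
    exact hx (Fin.ext (by exact_mod_cast h.trans ex0.symm))
  · intro h; exact absurd (Finset.mem_univ x0) h
end
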